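/- arXiv:2211.07212 — 4 statements merged into one kernel-verified Lean document; each statement's English description precedes it below -/
import Mathlib

section
/- Let b ∈ Δ_d^{>0}, let R : ℝ₊^d → ℝ be continuous on ℝ₊^d, continuously differentiable on (ℝ₊*)^d, convex, positively homogeneous of degree 1, and positive on the simplex, and let g : ℝ₊ → ℝ be C¹, convex and increasing. Then the function Γ_g(y) = g(R(y)) − Σᵢ bᵢ log yᵢ attains its minimum over (ℝ₊*)^d at a unique point y*. -/
/-!
Positive homogeneity and compactness of the simplex give `R y ≥ c ∑ yᵢ` with `c > 0`, so `g ∘ R`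
grows at least linearly in `∑ yᵢ`, while `∑ bᵢ log yᵢ ≤ log ∑ yᵢ`. Together with
`bᵢ log yᵢ → -∞` as `yᵢ → 0`, this makes `Γ_g` larger than `Γ_g 1` outside a compact box inside
the open orthant, so a minimizer exists. It is unique because `g ∘ R` is convex (`g` is convex and
nondecreasing) and `-∑ bᵢ log yᵢ` is strictly convex.
-/

open Finset Set Real Filter

theorem IsCompact.exists_isMinOn_of_lt_outside {α β : Type*} [LinearOrder α] [TopologicalSpace α]
    [ClosedIicTopology α] [TopologicalSpace β] {f : β → α} {K U : Set β} {z : β}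
    (hK : IsCompact K) (hKU : K ⊆ U) (hf : ContinuousOn f K) (hz : z ∈ K)
    (hout : ∀ x ∈ U \ K, f z < f x) : ∃ x ∈ U, IsMinOn f U x := by
  obtain ⟨x, hxK, hx⟩ := hK.exists_isMinOn ⟨z, hz⟩ hf
  refine ⟨x, hKU hxK, fun y hy => ?_⟩
  by_cases hyK : y ∈ K
  · exact hx hyK
  · exact (hx hz).trans (hout y ⟨hy, hyK⟩).le

theorem ConvexOn.comp_of_mapsTo {𝕜 E β : Type*} [Semiring 𝕜] [PartialOrder 𝕜] [AddCommMonoid E]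
    [AddCommMonoid β] [PartialOrder β] [SMul 𝕜 E] [SMul 𝕜 β] {s : Set E} {t : Set β} {f : E → β}
    {g : β → β} (hg : ConvexOn 𝕜 t g) (hf : ConvexOn 𝕜 s f) (hg' : MonotoneOn g t)
    (hst : MapsTo f s t) : ConvexOn 𝕜 s (g ∘ f) :=
  ⟨hf.1, fun _ hx _ hy _ _ ha hb hab =>
    (hg' (hst (hf.1 hx hy ha hb hab)) (hg.1 (hst hx) (hst hy) ha hb hab)
      (hf.2 hx hy ha hb hab)).trans (hg.2 (hst hx) (hst hy) ha hb hab)⟩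

theorem tendsto_mul_sub_log_atTop {k : ℝ} (hk : 0 < k) :
    Tendsto (fun S => k * S - log S) atTop atTop := by
  refine tendsto_atTop_mono' atTop ?_
    (tendsto_atTop_add_const_right _ (1 + log (k / 2))
      (tendsto_id.const_mul_atTop (half_pos hk)))
  filter_upwards [eventually_gt_atTop 0] with S hS
  have := log_le_sub_one_of_pos (mul_pos (half_pos hk) hS)
  rw [log_mul (half_pos hk).ne' hS.ne'] at this
  simp only [id]
  linarith

theorem ConvexOn.add_mul_le_of_one_le {g : ℝ → ℝ} (hg : ConvexOn ℝ (Ici 0) g) {t : ℝ}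
    (ht : 1 ≤ t) : g 0 + (g 1 - g 0) * t ≤ g t := by
  have h := hg.secant_mono (a := 0) (mem_Ici.2 le_rfl) (mem_Ici.2 zero_le_one)
    (mem_Ici.2 (zero_le_one.trans ht)) one_ne_zero (by linarith) ht
  rw [sub_zero, sub_zero, div_one, le_div_iff₀ (by linarith)] at h
  linarith

theorem ConvexOn.tendsto_comp_mul_sub_log_atTop {g : ℝ → ℝ} (hg : ConvexOn ℝ (Ici 0) g)
    (hg01 : g 0 < g 1) {c : ℝ} (hc : 0 < c) :
    Tendsto (fun S => g (c * S) - log S) atTop atTop := by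
  refine tendsto_atTop_mono' atTop ?_
    (tendsto_atTop_add_const_right _ (g 0)
      (tendsto_mul_sub_log_atTop (mul_pos (sub_pos.2 hg01) hc)))
  filter_upwards [eventually_ge_atTop c⁻¹] with S hS
  have := hg.add_mul_le_of_one_le (t := c * S) (by rwa [← inv_mul_le_iff₀ hc, mul_one])
  linarith

theorem convex_setOf_forall_mem {ι : Type*} {t : Set ℝ} (ht : Convex ℝ t) :
    Convex ℝ {y : ι → ℝ | ∀ i, y i ∈ t} := by
  simpa [Set.pi] using convex_pi (s := univ) fun i _ => ht

variable {ι : Type*} [Fintype ι]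

theorem StrictConcaveOn.sum_mul_comp_apply {t : Set ℝ} {f : ℝ → ℝ} (hf : StrictConcaveOn ℝ t f)
    {w : ι → ℝ} (hw : ∀ i, 0 < w i) :
    StrictConcaveOn ℝ {y : ι → ℝ | ∀ i, y i ∈ t} (fun y => ∑ i, w i * f (y i)) := by
  refine ⟨convex_setOf_forall_mem hf.1, fun x hx y hy hxy a b ha hb hab => ?_⟩
  obtain ⟨i, hi⟩ := Function.ne_iff.1 hxy
  simp only [smul_eq_mul, Finset.mul_sum, ← Finset.sum_add_distrib, Pi.add_apply, Pi.smul_apply]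
  refine Finset.sum_lt_sum (fun j _ => ?_) ⟨i, Finset.mem_univ i, ?_⟩
  · have := hf.concaveOn.2 (hx j) (hy j) ha.le hb.le hab
    simp only [smul_eq_mul] at this
    nlinarith [hw j]
  · have := hf.2 (hx i) (hy i) hi ha hb hab
    simp only [smul_eq_mul] at this
    nlinarith [hw i]

theorem exists_pos_mul_sum_le_of_homogeneous [Nonempty ι] {R : (ι → ℝ) → ℝ}
    (hRcont : ContinuousOn R (stdSimplex ℝ ι))
    (hRhom : ∀ y : ι → ℝ, (∀ i, 0 ≤ y i) → ∀ l : ℝ, 0 ≤ l → R (fun i => l * y i) = l * R y)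
    (hRpos : ∀ y ∈ stdSimplex ℝ ι, 0 < R y) :
    ∃ c > 0, ∀ y : ι → ℝ, (∀ i, 0 < y i) → c * ∑ i, y i ≤ R y := by
  obtain ⟨w, hw, hwmin⟩ :=
    (isCompact_stdSimplex ℝ ι).exists_isMinOn (isPathConnected_stdSimplex ι).nonempty hRcont
  refine ⟨R w, hRpos w hw, fun y hy => ?_⟩
  set S := ∑ i, y i
  have hS : 0 < S := Finset.sum_pos (fun i _ => hy i) univ_nonempty
  have hu : (fun i => S⁻¹ * y i) ∈ stdSimplex ℝ ι :=
    ⟨fun i => by have := hy i; positivity, by rw [← Finset.mul_sum, inv_mul_cancel₀ hS.ne']⟩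
  calc R w * S ≤ R (fun i => S⁻¹ * y i) * S := by gcongr; exact hwmin hu
    _ = R y := by
      rw [mul_comm, ← hRhom _ hu.1 S hS.le]
      simp only [mul_inv_cancel_left₀ hS.ne']

theorem sum_mul_log_le_log {b y : ι → ℝ} {A : ℝ} (hb : ∀ i, 0 ≤ b i) (hbsum : ∑ i, b i = 1)
    (hy : ∀ i, 0 < y i) (hyA : ∀ i, y i ≤ A) : ∑ i, b i * log (y i) ≤ log A := by
  calc ∑ i, b i * log (y i) ≤ ∑ i, b i * log A := by
        gcongr with i; exacts [hb i, hy i, hyA i]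
    _ = log A := by rw [← Finset.sum_mul, hbsum, one_mul]

theorem sum_mul_log_le_mul_log_add_log [DecidableEq ι] {b y : ι → ℝ} {A : ℝ} (hb : ∀ i, 0 ≤ b i)
    (hbsum : ∑ i, b i = 1) (hy : ∀ i, 0 < y i) (hyA : ∀ i, y i ≤ A) (hA : 1 ≤ A) (i : ι) :
    ∑ j, b j * log (y j) ≤ b i * log (y i) + log A := by
  rw [← Finset.add_sum_erase _ _ (mem_univ i)]
  gcongr
  calc ∑ j ∈ univ.erase i, b j * log (y j) ≤ ∑ j ∈ univ.erase i, b j * log A := by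
        gcongr with j; exacts [hb j, hy j, hyA j]
    _ ≤ ∑ j, b j * log A :=
        sum_le_sum_of_subset_of_nonneg (subset_univ _) fun j _ _ =>
          mul_nonneg (hb j) (log_nonneg hA)
    _ = log A := by rw [← Finset.sum_mul, hbsum, one_mul]

theorem exists_isMinOn_sub_sum_mul_log {b : ι → ℝ} (hb : ∀ i, 0 < b i) (hbsum : ∑ i, b i = 1)
    {F : (ι → ℝ) → ℝ} {φ : ℝ → ℝ} {m : ℝ} (hF : ContinuousOn F {y | ∀ i, 0 < y i})
    (hFm : ∀ y : ι → ℝ, (∀ i, 0 < y i) → m ≤ F y)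
    (hφ : Tendsto (fun S => φ S - log S) atTop atTop)
    (hFφ : ∀ y : ι → ℝ, (∀ i, 0 < y i) → φ (∑ i, y i) ≤ F y) :
    ∃ y ∈ {y : ι → ℝ | ∀ i, 0 < y i},
      IsMinOn (fun y => F y - ∑ i, b i * log (y i)) {y | ∀ i, 0 < y i} y := by
  classical
  set V := F 1
  obtain ⟨A₀, hA₀⟩ := eventually_atTop.1 (hφ.eventually_gt_atTop V)
  set A := max A₀ 1
  have hA : 1 ≤ A := le_max_right _ _
  -- below `ε i`, the `i`-th log term alone pushes the objective above its value at `1`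
  set ε : ι → ℝ := fun i => exp (-(V - m + log A) / b i)
  have hK : Icc ε (fun _ => A) ⊆ {y | ∀ i, 0 < y i} := fun y hy i => (exp_pos _).trans_le (hy.1 i)
  have h1K : (1 : ι → ℝ) ∈ Icc ε (fun _ => A) := by
    refine ⟨fun i => exp_le_one_iff.2 (div_nonpos_of_nonpos_of_nonneg ?_ (hb i).le), fun _ => hA⟩
    linarith [hFm 1 fun _ => one_pos, log_nonneg hA]
  have hcont : ContinuousOn (fun y => F y - ∑ i, b i * log (y i)) {y | ∀ i, 0 < y i} :=
    hF.sub (continuousOn_finsetSum _ fun i _ => continuousOn_const.mul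
      ((continuous_apply i).continuousOn.log fun y hy => (hy i).ne'))
  refine isCompact_Icc.exists_isMinOn_of_lt_outside hK (hcont.mono hK) h1K ?_
  rintro y ⟨hy, hyK⟩
  simp only [Pi.one_apply, log_one, mul_zero, sum_const_zero, sub_zero]
  by_cases hyA : ∀ i, y i ≤ A
  · obtain ⟨i, hi⟩ : ∃ i, y i < ε i := by
      by_contra! h
      exact hyK ⟨h, hyA⟩
    have hlog : b i * log (y i) < -(V - m + log A) := by
      have := mul_lt_mul_of_pos_left (log_lt_log (hy i) hi) (hb i)
      rwa [log_exp, mul_div_cancel₀ _ (hb i).ne'] at this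
    linarith [sum_mul_log_le_mul_log_add_log (fun j => (hb j).le) hbsum hy hyA hA i, hFm y hy]
  · obtain ⟨i, hi⟩ : ∃ i, A < y i := by simpa only [not_forall, not_le] using hyA
    have hyS : ∀ j, y j ≤ ∑ k, y k := fun j =>
      single_le_sum (fun k _ => (hy k).le) (mem_univ j)
    linarith [hA₀ _ ((le_max_left _ _).trans (hi.le.trans (hyS i))), hFφ y hy,
      sum_mul_log_le_log (fun j => (hb j).le) hbsum hy hyS]

theorem GammaG_exists_unique_minimizer_general {d : ℕ} (hd : 0 < d)
    (R : (Fin d → ℝ) → ℝ)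
    (hRcont : ContinuousOn R {y : Fin d → ℝ | ∀ i, 0 ≤ y i})
    (hRconv : ConvexOn ℝ {y : Fin d → ℝ | ∀ i, 0 ≤ y i} R)
    (hRhom : ∀ (y : Fin d → ℝ), (∀ i, 0 ≤ y i) → ∀ l : ℝ, 0 ≤ l →
      R (fun i => l * y i) = l * R y)
    (hRpos : ∀ y : Fin d → ℝ, (∀ i, 0 ≤ y i) → (∑ i, y i) = 1 → 0 < R y)
    (b : Fin d → ℝ) (hb : ∀ i, 0 < b i) (hbsum : ∑ i, b i = 1)
    (g : ℝ → ℝ)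
    (hgconv : ConvexOn ℝ (Set.Ici 0) g) (hgmono : StrictMonoOn g (Set.Ici 0)) :
    ∃! y : Fin d → ℝ, (∀ i, 0 < y i) ∧
      ∀ z : Fin d → ℝ, (∀ i, 0 < z i) →
        g (R y) - ∑ i, b i * Real.log (y i) ≤ g (R z) - ∑ i, b i * Real.log (z i) := by
  have : Nonempty (Fin d) := ⟨⟨0, hd⟩⟩
  set U := {y : Fin d → ℝ | ∀ i, 0 < y i}
  have hUnn : U ⊆ {y | ∀ i, 0 ≤ y i} := fun y hy i => (hy i).le
  obtain ⟨c, hc, hRlow⟩ := exists_pos_mul_sum_le_of_homogeneous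
    (hRcont.mono fun y hy => hy.1) hRhom fun y hy => hRpos y hy.1 hy.2
  have hcS : ∀ y ∈ U, 0 < c * ∑ i, y i := fun y hy =>
    mul_pos hc (sum_pos (fun i _ => hy i) univ_nonempty)
  have hRU : MapsTo R U (Ioi 0) := fun y hy => (hcS y hy).trans_le (hRlow y hy)
  have hgR : ContinuousOn (g ∘ R) U :=
    (interior_Ici (a := (0 : ℝ)) ▸ hgconv.continuousOn_interior).comp (hRcont.mono hUnn) hRU
  have hg_mono : MonotoneOn g (Ici 0) := hgmono.monotoneOn
  obtain ⟨y, hyU, hmin⟩ := exists_isMinOn_sub_sum_mul_log hb hbsum hgR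
    (fun y hy => hg_mono (mem_Ici.2 le_rfl) (mem_Ici.2 (hRU hy).le) (hRU hy).le)
    (hgconv.tendsto_comp_mul_sub_log_atTop (hgmono (mem_Ici.2 le_rfl) (mem_Ici.2 zero_le_one)
      zero_lt_one) hc)
    (fun y hy => hg_mono (mem_Ici.2 (hcS y hy).le) (mem_Ici.2 (hRU hy).le) (hRlow y hy))
  have hstrict : StrictConvexOn ℝ U (fun y => g (R y) - ∑ i, b i * log (y i)) :=
    (hgconv.comp_of_mapsTo (hRconv.subset hUnn (convex_setOf_forall_mem (convex_Ioi 0)))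
      hg_mono fun y hy => mem_Ici.2 (hRU hy).le).sub_strictConcaveOn
      (strictConcaveOn_log_Ioi.sum_mul_comp_apply hb)
  exact ⟨y, ⟨hyU, fun z hz => hmin hz⟩, fun z hz =>
    hstrict.eq_of_isMinOn (fun w hw => hz.2 w hw) hmin hz.1 hyU⟩

/-- Existence and uniqueness of the minimizer of `Γ_g` over the positive orthant. -/
theorem GammaG_exists_unique_minimizer {d : ℕ} (hd : 0 < d)
    (R : (Fin d → ℝ) → ℝ)
    (hRcont : ContinuousOn R {y : Fin d → ℝ | ∀ i, 0 ≤ y i})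
    (hRdiff : ContDiffOn ℝ 1 R {y : Fin d → ℝ | ∀ i, 0 < y i})
    (hRconv : ConvexOn ℝ {y : Fin d → ℝ | ∀ i, 0 ≤ y i} R)
    (hRhom : ∀ (y : Fin d → ℝ), (∀ i, 0 ≤ y i) → ∀ l : ℝ, 0 ≤ l →
      R (fun i => l * y i) = l * R y)
    (hRpos : ∀ y : Fin d → ℝ, (∀ i, 0 ≤ y i) → (∑ i, y i) = 1 → 0 < R y)
    (b : Fin d → ℝ) (hb : ∀ i, 0 < b i) (hbsum : ∑ i, b i = 1)
    (g : ℝ → ℝ) (hg : ContDiffOn ℝ 1 g (Set.Ici 0))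
    (hgconv : ConvexOn ℝ (Set.Ici 0) g) (hgmono : StrictMonoOn g (Set.Ici 0)) :
    ∃! y : Fin d → ℝ, (∀ i, 0 < y i) ∧
      ∀ z : Fin d → ℝ, (∀ i, 0 < z i) →
        g (R y) - ∑ i, b i * Real.log (y i) ≤ g (R z) - ∑ i, b i * Real.log (z i) :=
  GammaG_exists_unique_minimizer_general hd R hRcont hRconv hRhom hRpos b hb hbsum g hgconv hgmono
end

section
/- Under the assumptions of the existence theorem, if y* is the unique minimizer of Γ_g(y) = g(R(y)) − Σᵢ bᵢ log yᵢ over (ℝ₊*)^d, then θ* := y*/Σᵢ y*ᵢ lies in the open simplex and satisfies the Risk Budgeting equations θ*ᵢ ∂ᵢR(θ*) = bᵢ R(θ*) for all i. -/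
/-!
At the minimiser `y*` the gradient of `Γ_g` vanishes, i.e. `g'(R y*) ∂ᵢR(y*) = bᵢ / y*ᵢ`.
Multiplying by `y*ᵢ` and summing, Euler's identity `∑ yᵢ ∂ᵢR(y) = R(y)` gives
`g'(R y*) R(y*) = ∑ bᵢ = 1`, hence `y*ᵢ ∂ᵢR(y*) = bᵢ R(y*)`. Since `∂ᵢR` is homogeneous of
degree 0 and `R` of degree 1, both sides scale by the same factor along the ray through `y*`,
so the equations persist at `θ* = y* / ∑ y*ⱼ`.
-/

open Set Filter Topology

theorem isOpen_setOf_forall_pos {ι : Type*} [Finite ι] :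
    IsOpen {y : ι → ℝ | ∀ i, 0 < y i} := by
  simpa [Set.pi] using
    isOpen_set_pi (s := fun _ : ι => Ioi (0 : ℝ)) finite_univ fun _ _ => isOpen_Ioi

section Homogeneous

variable {E : Type*} [NormedAddCommGroup E] [NormedSpace ℝ E]
  {f : E → ℝ} {f' : E →L[ℝ] ℝ} {y : E}

theorem HasFDerivAt.apply_self_eq_of_homogeneous (hf : HasFDerivAt f f' y)
    (hhom : ∀ᶠ t in 𝓝 (1 : ℝ), f (t • y) = t * f y) : f' y = f y := by
  have hline : HasDerivAt (fun t : ℝ => t • y) y 1 := by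
    simpa using (hasDerivAt_id (1 : ℝ)).smul_const y
  have hcomp : HasDerivAt (fun t : ℝ => f (t • y)) (f' y) 1 :=
    (by simpa using hf : HasFDerivAt f f' ((1 : ℝ) • y)).comp_hasDerivAt 1 hline
  have hlin : HasDerivAt (fun t : ℝ => t * f y) (f y) 1 := by
    simpa using (hasDerivAt_id (1 : ℝ)).mul_const (f y)
  exact hcomp.unique (hlin.congr_of_eventuallyEq hhom)

theorem HasFDerivAt.of_homogeneous_smul {c : ℝ} (hc : c ≠ 0)
    (hf : HasFDerivAt f f' (c • y)) (hhom : ∀ᶠ x in 𝓝 y, f (c • x) = c * f x) :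
    HasFDerivAt f f' y := by
  have hcomp : HasFDerivAt (fun x => c⁻¹ * f (c • x)) (c⁻¹ • f'.comp (c • .id ℝ E)) y :=
    (hf.comp y (c • ContinuousLinearMap.id ℝ E).hasFDerivAt).const_mul c⁻¹
  have hf' : c⁻¹ • f'.comp (c • .id ℝ E) = f' := by
    ext v
    simp [hc]
  rw [hf'] at hcomp
  refine hcomp.congr_of_eventuallyEq ?_
  filter_upwards [hhom] with x hx
  rw [hx, inv_mul_cancel_left₀ hc]

end Homogeneous

section FirstOrder

variable {ι : Type*} [Fintype ι] {b y : ι → ℝ}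

theorem hasFDerivAt_sum_mul_log (hy : ∀ i, y i ≠ 0) :
    HasFDerivAt (fun z : ι → ℝ => ∑ i, b i * Real.log (z i))
      (∑ i, (b i / y i) • (ContinuousLinearMap.proj i : (ι → ℝ) →L[ℝ] ℝ)) y := by
  simpa only [smul_smul, div_eq_mul_inv] using HasFDerivAt.fun_sum fun i _ =>
    ((hasFDerivAt_apply i y).log (hy i)).const_mul (b i)

theorem deriv_mul_fderiv_single_eq_of_isMinOn [DecidableEq ι] {R : (ι → ℝ) → ℝ} {g : ℝ → ℝ}
    (hy : ∀ i, 0 < y i) (hR : DifferentiableAt ℝ R y) (hg : DifferentiableAt ℝ g (R y))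
    (hmin : IsMinOn (fun z => g (R z) - ∑ i, b i * Real.log (z i)) {z | ∀ i, 0 < z i} y)
    (i : ι) : deriv g (R y) * fderiv ℝ R y (Pi.single i 1) = b i / y i := by
  have hΓ := (hg.hasDerivAt.comp_hasFDerivAt y hR.hasFDerivAt).sub
    (hasFDerivAt_sum_mul_log (b := b) fun i => (hy i).ne')
  have hcrit := (hmin.isLocalMin (isOpen_setOf_forall_pos.mem_nhds hy)).hasFDerivAt_eq_zero hΓ
  have hzero := congr($hcrit (Pi.single i 1))
  simp only [sub_apply, smul_apply, smul_eq_mul, sum_apply, ContinuousLinearMap.proj_apply,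
    Pi.single_apply, mul_ite, mul_one, mul_zero, Finset.sum_ite_eq', Finset.mem_univ, ↓reduceIte,
    zero_apply] at hzero
  linarith

theorem mul_apply_single_eq_mul_apply_self [DecidableEq ι] {R' : (ι → ℝ) →L[ℝ] ℝ} {G : ℝ}
    (hy : ∀ i, y i ≠ 0) (hb : ∑ i, b i = 1) (hfoc : ∀ i, G * R' (Pi.single i 1) = b i / y i)
    (i : ι) : y i * R' (Pi.single i 1) = b i * R' y := by
  have hfoc' : ∀ i, G * R' (Pi.single i 1) * y i = b i := fun i => by
    rw [hfoc i, div_mul_cancel₀ _ (hy i)]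
  have hGR : G * R' y = 1 := by
    calc G * R' y = ∑ i, G * R' (Pi.single i 1) * y i := by
          conv_lhs => rw [← Finset.univ_sum_single y]
          simp only [map_sum, Finset.mul_sum]
          refine Finset.sum_congr rfl fun j _ => ?_
          rw [mul_assoc, mul_comm (R' _), ← smul_eq_mul (y j), ← map_smul, ← Pi.single_smul',
            smul_eq_mul, mul_one]
      _ = 1 := by simp only [hfoc', hb]
  linear_combination (-(y i * R' (Pi.single i 1))) * hGR + R' y * hfoc' i

end FirstOrder

theorem minimizer_solves_RB_general {d : ℕ} (hd : 0 < d)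
    (R : (Fin d → ℝ) → ℝ)
    (hRdiff : ContDiffOn ℝ 1 R {y : Fin d → ℝ | ∀ i, 0 < y i})
    (hRhom : ∀ (y : Fin d → ℝ), (∀ i, 0 ≤ y i) → ∀ l : ℝ, 0 ≤ l →
      R (fun i => l * y i) = l * R y)
    (hRpos : ∀ y : Fin d → ℝ, (∀ i, 0 ≤ y i) → (∑ i, y i) = 1 → 0 < R y)
    (b : Fin d → ℝ) (hbsum : ∑ i, b i = 1)
    (g : ℝ → ℝ) (hg : ContDiffOn ℝ 1 g (Set.Ici 0))
    (ystar : Fin d → ℝ) (hystar : ∀ i, 0 < ystar i)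
    (hmin : ∀ z : Fin d → ℝ, (∀ i, 0 < z i) →
      g (R ystar) - ∑ i, b i * Real.log (ystar i) ≤ g (R z) - ∑ i, b i * Real.log (z i)) :
    let θ : Fin d → ℝ := fun i => ystar i / ∑ j, ystar j
    (∀ i, 0 < θ i) ∧ (∑ i, θ i) = 1 ∧
      ∀ i, θ i * fderiv ℝ R θ (Pi.single i 1) = b i * R θ := by
  intro θ
  set S := ∑ j, ystar j
  have hS : 0 < S := Finset.sum_pos (fun j _ => hystar j) ⟨⟨0, hd⟩, Finset.mem_univ _⟩
  have hθpos : ∀ i, 0 < θ i := fun i => div_pos (hystar i) hS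
  have hθsum : ∑ i, θ i = 1 := by rw [← Finset.sum_div, div_self hS.ne']
  have hSθ : S • θ = ystar := funext fun i => mul_div_cancel₀ (ystar i) hS.ne'
  have hhom : ∀ x, (∀ i, 0 < x i) → ∀ c, 0 < c → R (c • x) = c * R x :=
    fun x hx c hc => hRhom x (fun i => (hx i).le) c hc.le
  have hRS : R ystar = S * R θ := hSθ ▸ hhom θ hθpos S hS
  have hR : HasFDerivAt R (fderiv ℝ R ystar) ystar :=
    ((hRdiff.differentiableOn one_ne_zero).differentiableAt
      (isOpen_setOf_forall_pos.mem_nhds hystar)).hasFDerivAt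
  have hgrad : fderiv ℝ R θ = fderiv ℝ R ystar :=
    (HasFDerivAt.of_homogeneous_smul hS.ne' (by rwa [hSθ])
      (eventually_of_mem (isOpen_setOf_forall_pos.mem_nhds hθpos)
        fun x hx => hhom x hx S hS)).fderiv
  have heuler : fderiv ℝ R ystar ystar = R ystar :=
    hR.apply_self_eq_of_homogeneous
      ((eventually_gt_nhds one_pos).mono fun t ht => hhom ystar hystar t ht)
  have hgd : DifferentiableAt ℝ g (R ystar) :=
    (hg.differentiableOn one_ne_zero).differentiableAt
      (Ici_mem_nhds (hRS ▸ mul_pos hS (hRpos θ (fun i => (hθpos i).le) hθsum)))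
  have hfoc := deriv_mul_fderiv_single_eq_of_isMinOn hystar hR.differentiableAt hgd
    (isMinOn_iff.mpr hmin)
  refine ⟨hθpos, hθsum, fun i => ?_⟩
  have hRB := mul_apply_single_eq_mul_apply_self (fun i => (hystar i).ne') hbsum hfoc i
  have hyθ : ystar i = S * θ i := by rw [← hSθ]; rfl
  rw [heuler, hRS, hyθ] at hRB
  rw [hgrad]
  apply mul_left_cancel₀ hS.ne'
  linear_combination hRB

/-- The normalization of the minimizer of `Γ_g` solves the Risk Budgeting problem `RB_b`. -/
theorem minimizer_solves_RB {d : ℕ} (hd : 0 < d)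
    (R : (Fin d → ℝ) → ℝ)
    (hRcont : ContinuousOn R {y : Fin d → ℝ | ∀ i, 0 ≤ y i})
    (hRdiff : ContDiffOn ℝ 1 R {y : Fin d → ℝ | ∀ i, 0 < y i})
    (hRconv : ConvexOn ℝ {y : Fin d → ℝ | ∀ i, 0 ≤ y i} R)
    (hRhom : ∀ (y : Fin d → ℝ), (∀ i, 0 ≤ y i) → ∀ l : ℝ, 0 ≤ l →
      R (fun i => l * y i) = l * R y)
    (hRpos : ∀ y : Fin d → ℝ, (∀ i, 0 ≤ y i) → (∑ i, y i) = 1 → 0 < R y)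
    (b : Fin d → ℝ) (hb : ∀ i, 0 < b i) (hbsum : ∑ i, b i = 1)
    (g : ℝ → ℝ) (hg : ContDiffOn ℝ 1 g (Set.Ici 0))
    (hgconv : ConvexOn ℝ (Set.Ici 0) g) (hgmono : StrictMonoOn g (Set.Ici 0))
    (ystar : Fin d → ℝ) (hystar : ∀ i, 0 < ystar i)
    (hmin : ∀ z : Fin d → ℝ, (∀ i, 0 < z i) →
      g (R ystar) - ∑ i, b i * Real.log (ystar i) ≤ g (R z) - ∑ i, b i * Real.log (z i)) :
    let θ : Fin d → ℝ := fun i => ystar i / ∑ j, ystar j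
    (∀ i, 0 < θ i) ∧ (∑ i, θ i) = 1 ∧
      ∀ i, θ i * fderiv ℝ R θ (Pi.single i 1) = b i * R θ :=
  minimizer_solves_RB_general hd R hRdiff hRhom hRpos b hbsum g hg ystar hystar hmin
end

section
/- (Rockafellar–Uryasev) For an integrable real-valued random variable Z and α ∈ (0,1), the Expected Shortfall ES_α(Z) = (1/(1−α)) ∫_α^1 VaR_s(Z) ds satisfies ES_α(Z) = inf over ζ ∈ ℝ of ζ + (1/(1−α)) E[(Z − ζ)₊], and the infimum is attained at ζ = VaR_α(Z). -/
open MeasureTheory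

/-- Value-at-Risk at level `s` of the loss `Z` under the probability measure `μ`. -/
noncomputable def VaR {Ω : Type*} [MeasurableSpace Ω] (μ : Measure Ω)
    (Z : Ω → ℝ) (s : ℝ) : ℝ :=
  sInf {z : ℝ | s ≤ (μ {ω | Z ω ≤ z}).toReal}

/-- Expected Shortfall at level `α` of the loss `Z` under `μ`. -/
noncomputable def ES {Ω : Type*} [MeasurableSpace Ω] (μ : Measure Ω)
    (Z : Ω → ℝ) (α : ℝ) : ℝ :=
  (1 - α)⁻¹ * ∫ s in Set.Ioc α 1, VaR μ Z s

/-!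
On `(0, 1)` the quantile function `Q = VaR_·(Z)` satisfies `Q s ≤ x ↔ s ≤ F x`, `F` the
distribution function of `Z`, so it carries Lebesgue measure on `(0, 1)` to the law of `Z` and
`E[(Z - ζ)₊] = ∫₀¹ (Q s - ζ)₊ ds`. Hence
`(1 - α) (ES_α(Z) - ζ) = ∫_α^1 (Q s - ζ) ds ≤ ∫₀¹ (Q s - ζ)₊ ds = E[(Z - ζ)₊]`, with equality at
`ζ = Q α` because `Q` is nondecreasing: `Q - Q α` is nonnegative on `(α, 1)` and nonpositive on
`(0, α]`.
-/

open Set Filter Topology ProbabilityTheory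

section PositivePart

variable {X : Type*} [MeasurableSpace X] {μ : Measure X} {f : X → ℝ} {s t : Set X}

theorem setIntegral_le_measureReal_mul_add_setIntegral_posPart (hst : s ⊆ t) (ht : μ t ≠ ⊤)
    (hf : IntegrableOn f t μ) (c : ℝ) :
    ∫ x in s, f x ∂μ ≤ μ.real s * c + ∫ x in t, max (f x - c) 0 ∂μ := by
  have hfc : IntegrableOn (fun x => f x - c) t μ := hf.sub (integrableOn_const ht)
  calc ∫ x in s, f x ∂μ = μ.real s * c + ∫ x in s, (f x - c) ∂μ := by
        rw [integral_sub (hf.mono_set hst) (integrableOn_const (measure_ne_top_of_subset hst ht)),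
          setIntegral_const, smul_eq_mul]
        ring
    _ ≤ μ.real s * c + ∫ x in s, max (f x - c) 0 ∂μ :=
        (add_le_add_iff_left _).2 (integral_mono (hfc.mono_set hst) (hfc.mono_set hst).pos_part
          fun x => le_max_left _ _)
    _ ≤ μ.real s * c + ∫ x in t, max (f x - c) 0 ∂μ :=
        (add_le_add_iff_left _).2 (setIntegral_mono_set hfc.pos_part
          (ae_of_all _ fun x => le_max_right _ _) hst.eventuallyLE)

theorem setIntegral_eq_measureReal_mul_add_setIntegral_posPart (hs : MeasurableSet s)
    (ht : MeasurableSet t) (hst : s ⊆ t) (hμs : μ s ≠ ⊤) (hf : IntegrableOn f s μ) {c : ℝ}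
    (hc_le : ∀ x ∈ s, c ≤ f x) (hle_c : ∀ x ∈ t \ s, f x ≤ c) :
    ∫ x in s, f x ∂μ = μ.real s * c + ∫ x in t, max (f x - c) 0 ∂μ := by
  rw [setIntegral_eq_of_subset_of_forall_sdiff_eq_zero ht hst
      fun x hx => max_eq_right (sub_nonpos.2 (hle_c x hx)),
    setIntegral_congr_fun hs fun x hx => max_eq_left (sub_nonneg.2 (hc_le x hx)),
    integral_sub hf (integrableOn_const hμs), setIntegral_const, smul_eq_mul]
  ring

end PositivePart

lemma Real.volume_Ioo_inter_Iic {c : ℝ} (hc : c ≤ 1) :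
    volume (Ioo 0 1 ∩ Iic c) = ENNReal.ofReal c := by
  refine le_antisymm ?_ ?_
  · calc volume (Ioo 0 1 ∩ Iic c) ≤ volume (Ioc 0 c) :=
          measure_mono fun x hx => ⟨hx.1.1, hx.2⟩
      _ = ENNReal.ofReal c := by rw [Real.volume_Ioc, sub_zero]
  · calc ENNReal.ofReal c = volume (Ioo 0 c) := by rw [Real.volume_Ioo, sub_zero]
      _ ≤ volume (Ioo 0 1 ∩ Iic c) :=
          measure_mono fun x hx => ⟨⟨hx.1, hx.2.trans_le hc⟩, hx.2.le⟩

namespace ProbabilityTheory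

/-- Only meaningful on `(0, 1)`: elsewhere the set may be empty or unbounded below, and `sInf`
returns junk. -/
noncomputable def quantile (ν : Measure ℝ) (s : ℝ) : ℝ := sInf {x | s ≤ cdf ν x}

variable {ν : Measure ℝ} {s x α : ℝ}

lemma bddBelow_setOf_le_cdf (hs : 0 < s) : BddBelow {x | s ≤ cdf ν x} := by
  obtain ⟨M, hM⟩ := eventually_atBot.1 ((tendsto_cdf_atBot (μ := ν)).eventually_lt_const hs)
  exact ⟨M, fun x hx => le_of_not_ge fun hxM => (hM x hxM).not_ge hx⟩

lemma nonempty_setOf_le_cdf (hs : s < 1) : {x | s ≤ cdf ν x}.Nonempty :=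
  let ⟨x, hx⟩ := ((tendsto_cdf_atTop (μ := ν)).eventually_const_lt hs).exists
  ⟨x, hx.le⟩

lemma quantile_le_iff [IsProbabilityMeasure ν] (hs : s ∈ Ioo 0 1) :
    quantile ν s ≤ x ↔ s ≤ cdf ν x := by
  refine ⟨fun h => ?_, fun h => csInf_le (bddBelow_setOf_le_cdf hs.1) h⟩
  have hcont : Tendsto (cdf ν) (𝓝[>] x) (𝓝 (cdf ν x)) :=
    ((cdf ν).right_continuous x).tendsto.mono_left (nhdsWithin_mono x Ioi_subset_Ici_self)
  refine ge_of_tendsto hcont (eventually_nhdsWithin_of_forall fun y hy => ?_)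
  obtain ⟨z, hz, hzy⟩ := exists_lt_of_csInf_lt (nonempty_setOf_le_cdf hs.2) (h.trans_lt hy)
  exact hz.trans (monotone_cdf ν hzy.le)

lemma monotoneOn_quantile : MonotoneOn (quantile ν) (Ioo 0 1) := fun _ hs _ ht hst =>
  csInf_le_csInf (bddBelow_setOf_le_cdf hs.1) (nonempty_setOf_le_cdf ht.2)
    fun _ hx => hst.trans hx

lemma aemeasurable_quantile : AEMeasurable (quantile ν) (volume.restrict (Ioo 0 1)) :=
  aemeasurable_restrict_of_monotoneOn measurableSet_Ioo monotoneOn_quantile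

variable [IsProbabilityMeasure ν]

theorem map_quantile : (volume.restrict (Ioo 0 1)).map (quantile ν) = ν := by
  refine (Measure.ext_of_Iic ν _ fun x => ?_).symm
  have hpre : quantile ν ⁻¹' Iic x ∩ Ioo 0 1 = Ioo 0 1 ∩ Iic (cdf ν x) := by
    ext s
    simp only [mem_inter_iff, mem_preimage, mem_Iic]
    exact ⟨fun h => ⟨h.2, (quantile_le_iff h.2).1 h.1⟩,
      fun h => ⟨(quantile_le_iff h.1).2 h.2, h.1⟩⟩
  rw [Measure.map_apply_of_aemeasurable aemeasurable_quantile measurableSet_Iic,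
    Measure.restrict_apply' measurableSet_Ioo, hpre,
    Real.volume_Ioo_inter_Iic (cdf_le_one ν x), ofReal_cdf]

theorem integral_comp_quantile {g : ℝ → ℝ} (hg : AEStronglyMeasurable g ν) :
    ∫ s in Ioo 0 1, g (quantile ν s) = ∫ x, g x ∂ν := by
  have h := integral_map (aemeasurable_quantile (ν := ν)) (f := g) (by rwa [map_quantile])
  rw [map_quantile] at h
  exact h.symm

theorem integrableOn_quantile (hν : Integrable id ν) : IntegrableOn (quantile ν) (Ioo 0 1) :=
  (integrable_map_measure (g := id) (by rw [map_quantile]; exact hν.aestronglyMeasurable)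
    aemeasurable_quantile).1 (by rwa [map_quantile])

theorem setIntegral_quantile_le (hν : Integrable id ν) (hα : α ∈ Icc 0 1) (ζ : ℝ) :
    ∫ s in Ioo α 1, quantile ν s ≤ (1 - α) * ζ + ∫ x, max (x - ζ) 0 ∂ν := by
  have h := setIntegral_le_measureReal_mul_add_setIntegral_posPart
    (Ioo_subset_Ioo_left hα.1) measure_Ioo_lt_top.ne (integrableOn_quantile hν) ζ
  rwa [Real.volume_real_Ioo_of_le hα.2,
    integral_comp_quantile (g := fun x => max (x - ζ) 0) (by fun_prop)] at h

theorem setIntegral_quantile_eq (hν : Integrable id ν) (hα : α ∈ Ioo 0 1) :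
    ∫ s in Ioo α 1, quantile ν s
      = (1 - α) * quantile ν α + ∫ x, max (x - quantile ν α) 0 ∂ν := by
  have hsub : Ioo α 1 ⊆ Ioo 0 1 := Ioo_subset_Ioo_left hα.1.le
  have h := setIntegral_eq_measureReal_mul_add_setIntegral_posPart measurableSet_Ioo
    measurableSet_Ioo hsub measure_Ioo_lt_top.ne ((integrableOn_quantile hν).mono_set hsub)
    (fun s hs => monotoneOn_quantile hα (hsub hs) hs.1.le)
    (fun s hs => monotoneOn_quantile hs.1 hα (not_lt.1 fun h => hs.2 ⟨h, hs.1.2⟩))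
  rwa [Real.volume_real_Ioo_of_le hα.2.le,
    integral_comp_quantile (g := fun x => max (x - quantile ν α) 0) (by fun_prop)] at h

end ProbabilityTheory

lemma VaR_eq_quantile_map {Ω : Type*} [MeasurableSpace Ω] {μ : Measure Ω}
    [IsProbabilityMeasure μ] {Z : Ω → ℝ} (hZ : AEMeasurable Z μ) :
    VaR μ Z = quantile (μ.map Z) := by
  have := Measure.isProbabilityMeasure_map hZ
  ext s
  simp only [VaR, quantile, cdf_eq_real, measureReal_def,
    Measure.map_apply_of_aemeasurable hZ measurableSet_Iic]
  rfl

/-- Rockafellar–Uryasev: `ES_α(Z) = inf_ζ (ζ + (1/(1-α)) E[(Z-ζ)₊])`, the infimum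
being attained at `ζ = VaR_α(Z)`. -/
theorem rockafellar_uryasev {Ω : Type*} [MeasurableSpace Ω] (μ : Measure Ω)
    [IsProbabilityMeasure μ] (Z : Ω → ℝ) (hZ : Integrable Z μ)
    (α : ℝ) (hα : α ∈ Set.Ioo (0 : ℝ) 1) :
    ES μ Z α = ⨅ ζ : ℝ, (ζ + (1 - α)⁻¹ * ∫ ω, max (Z ω - ζ) 0 ∂μ) ∧
    ES μ Z α = VaR μ Z α + (1 - α)⁻¹ * ∫ ω, max (Z ω - VaR μ Z α) 0 ∂μ := by
  set ν := μ.map Z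
  have : IsProbabilityMeasure ν := Measure.isProbabilityMeasure_map hZ.aemeasurable
  have hν : Integrable id ν :=
    (integrable_map_measure aestronglyMeasurable_id hZ.aemeasurable).2 hZ
  have hVaR : VaR μ Z = quantile ν := VaR_eq_quantile_map hZ.aemeasurable
  have hloss (ζ : ℝ) : ∫ ω, max (Z ω - ζ) 0 ∂μ = ∫ x, max (x - ζ) 0 ∂ν :=
    (integral_map hZ.aemeasurable (f := fun x => max (x - ζ) 0) (by fun_prop)).symm
  have hES : ES μ Z α = (1 - α)⁻¹ * ∫ s in Ioo α 1, quantile ν s := by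
    rw [ES, setIntegral_congr_set Ioo_ae_eq_Ioc.symm, hVaR]
  have hα' : 0 < 1 - α := sub_pos.2 hα.2
  have hle (ζ : ℝ) : ES μ Z α ≤ ζ + (1 - α)⁻¹ * ∫ ω, max (Z ω - ζ) 0 ∂μ := by
    rw [hES, hloss]
    calc (1 - α)⁻¹ * ∫ s in Ioo α 1, quantile ν s
        ≤ (1 - α)⁻¹ * ((1 - α) * ζ + ∫ x, max (x - ζ) 0 ∂ν) :=
          mul_le_mul_of_nonneg_left (setIntegral_quantile_le hν (Ioo_subset_Icc_self hα) ζ)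
            (inv_nonneg.2 hα'.le)
      _ = ζ + (1 - α)⁻¹ * ∫ x, max (x - ζ) 0 ∂ν := by field_simp
  have heq : ES μ Z α = VaR μ Z α + (1 - α)⁻¹ * ∫ ω, max (Z ω - VaR μ Z α) 0 ∂μ := by
    rw [hES, hloss, hVaR, setIntegral_quantile_eq hν hα]
    field_simp
  exact ⟨le_antisymm (le_ciInf hle) ((ciInf_le ⟨_, forall_mem_range.2 hle⟩ _).trans_eq heq.symm),
    heq⟩
end

section
/- Let u(ξ) = aξ₊ − bξ₋ with 0 ≤ a < 1 < b. Then the optimized certainty equivalent risk measure ρ(Z) = inf over ζ ∈ ℝ of (ζ − E[u(−Z+ζ)]) satisfies ρ(Z) = a·E[Z] + (1−a)·ES_{(b−1)/(b−a)}(Z) for every integrable random variable Z. -/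
open MeasureTheory

/-!
Since `(ζ - Z)₊ = (ζ - Z) + (Z - ζ)₊`, the objective equals
`a E[Z] + (b - a) ((1 - α) ζ + E[(Z - ζ)₊])` with `α = (b - 1)/(b - a)`. The quantile transform
(`VaR μ Z` under the uniform law on `(0,1)` has the law of `Z`) gives
`E[(Z - ζ)₊] = ∫₀¹ (VaR_s - ζ)₊ ds`, and for any nondecreasing integrable `q` on `(0,1)` the
Rockafellar–Uryasev function `(1 - α) ζ + ∫₀¹ (q s - ζ)₊ ds` is minimal at `ζ = q α`, with
value `∫_α¹ q = (1 - α) ES_α`.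
-/

open ProbabilityTheory Set

section RockafellarUryasev

variable {q : ℝ → ℝ} {α : ℝ}

lemma setIntegral_Ioo_sub_const (hq : IntegrableOn q (Ioo α 1)) (hα : α ≤ 1) (c : ℝ) :
    ∫ s in Ioo α 1, (q s - c) = (∫ s in Ioo α 1, q s) - (1 - α) * c := by
  rw [integral_sub hq (integrableOn_const (by simp)), setIntegral_const,
    Real.volume_real_Ioo_of_le hα, smul_eq_mul]

lemma setIntegral_Ioo_le_rockafellarUryasev (hq : IntegrableOn q (Ioo 0 1))
    (hα : α ∈ Ioo 0 1) (ζ : ℝ) :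
    ∫ s in Ioo α 1, q s ≤ (1 - α) * ζ + ∫ s in Ioo 0 1, max (q s - ζ) 0 := by
  have hsub : Ioo α 1 ⊆ Ioo 0 1 := Ioo_subset_Ioo_left hα.1.le
  have hpos : IntegrableOn (fun s => max (q s - ζ) 0) (Ioo 0 1) :=
    (hq.sub (integrableOn_const (by simp))).pos_part
  calc ∫ s in Ioo α 1, q s = (1 - α) * ζ + ∫ s in Ioo α 1, (q s - ζ) := by
        rw [setIntegral_Ioo_sub_const (hq.mono_set hsub) hα.2.le]; ring
    _ ≤ (1 - α) * ζ + ∫ s in Ioo α 1, max (q s - ζ) 0 :=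
        (add_le_add_iff_left _).2 <| setIntegral_mono
          ((hq.mono_set hsub).sub (integrableOn_const (by simp))) (hpos.mono_set hsub)
          fun s => le_max_left _ _
    _ ≤ (1 - α) * ζ + ∫ s in Ioo 0 1, max (q s - ζ) 0 :=
        (add_le_add_iff_left _).2 <|
          setIntegral_mono_set hpos (ae_of_all _ fun s => le_max_right _ _) hsub.eventuallyLE

lemma rockafellarUryasev_at_quantile (hmono : MonotoneOn q (Ioo 0 1))
    (hq : IntegrableOn q (Ioo 0 1)) (hα : α ∈ Ioo 0 1) :
    (1 - α) * q α + ∫ s in Ioo 0 1, max (q s - q α) 0 = ∫ s in Ioo α 1, q s := by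
  have hsub : Ioo α 1 ⊆ Ioo 0 1 := Ioo_subset_Ioo_left hα.1.le
  have hbelow : ∫ s in Ioo 0 1, max (q s - q α) 0 = ∫ s in Ioo α 1, max (q s - q α) 0 :=
    setIntegral_eq_of_subset_of_forall_sdiff_eq_zero measurableSet_Ioo hsub fun s hs =>
      max_eq_right <| sub_nonpos.2 <| hmono hs.1 hα <| not_lt.1 fun h => hs.2 ⟨h, hs.1.2⟩
  have habove : ∫ s in Ioo α 1, max (q s - q α) 0 = ∫ s in Ioo α 1, (q s - q α) :=
    setIntegral_congr_fun measurableSet_Ioo fun s hs =>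
      max_eq_left <| sub_nonneg.2 <| hmono hα (hsub hs) hs.1.le
  rw [hbelow, habove, setIntegral_Ioo_sub_const (hq.mono_set hsub) hα.2.le]
  ring

lemma isLeast_rockafellarUryasev (hmono : MonotoneOn q (Ioo 0 1))
    (hq : IntegrableOn q (Ioo 0 1)) (hα : α ∈ Ioo 0 1) :
    IsLeast (range fun ζ => (1 - α) * ζ + ∫ s in Ioo 0 1, max (q s - ζ) 0)
      (∫ s in Ioo α 1, q s) :=
  ⟨⟨q α, rockafellarUryasev_at_quantile hmono hq hα⟩,
    forall_mem_range.2 (setIntegral_Ioo_le_rockafellarUryasev hq hα)⟩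

end RockafellarUryasev

section Quantile

variable {Ω : Type*} [MeasurableSpace Ω] {μ : Measure Ω} [IsProbabilityMeasure μ]
  {Z : Ω → ℝ}

lemma VaR_eq_sInf_cdf (hZ : AEMeasurable Z μ) (s : ℝ) :
    VaR μ Z s = sInf {z | s ≤ cdf (μ.map Z) z} := by
  have := Measure.isProbabilityMeasure_map hZ
  simp only [VaR, cdf_eq_real, measureReal_def,
    Measure.map_apply_of_aemeasurable hZ measurableSet_Iic]
  rfl

lemma VaR_le_iff (hZ : AEMeasurable Z μ) {s z : ℝ} (hs : s ∈ Ioo 0 1) :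
    VaR μ Z s ≤ z ↔ s ≤ cdf (μ.map Z) z := by
  have := Measure.isProbabilityMeasure_map hZ
  set F := cdf (μ.map Z)
  obtain ⟨z₀, hz₀⟩ := ((tendsto_cdf_atBot _).eventually (gt_mem_nhds hs.1)).exists
  obtain ⟨z₁, hz₁⟩ := ((tendsto_cdf_atTop _).eventually (lt_mem_nhds hs.2)).exists
  have hbdd : BddBelow {z | s ≤ F z} :=
    ⟨z₀, fun z hz => le_of_not_gt fun h => (hz.trans (F.mono h.le)).not_gt hz₀⟩
  rw [VaR_eq_sInf_cdf hZ]
  refine ⟨fun h => ?_, fun h => csInf_le hbdd h⟩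
  refine ge_of_tendsto ((F.right_continuous z).mono Ioi_subset_Ici_self) ?_
  filter_upwards [self_mem_nhdsWithin] with z' hz'
  obtain ⟨w, hw, hwz'⟩ := exists_lt_of_csInf_lt ⟨z₁, hz₁.le⟩ (h.trans_lt hz')
  exact hw.trans (F.mono hwz'.le)

lemma VaR_monotoneOn (hZ : AEMeasurable Z μ) : MonotoneOn (VaR μ Z) (Ioo 0 1) :=
  fun _ hs _ ht hst => (VaR_le_iff hZ hs).2 (hst.trans ((VaR_le_iff hZ ht).1 le_rfl))

lemma volume_Iic_inter_Ioo_zero_one {c : ℝ} (hc : c ≤ 1) :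
    volume (Iic c ∩ Ioo 0 1) = ENNReal.ofReal c := by
  rw [measure_congr ((ae_eq_refl _).inter Ioo_ae_eq_Ioc), Iic_inter_Ioc_of_le hc,
    Real.volume_Ioc, sub_zero]

theorem map_VaR_volume_restrict_Ioo (hZ : AEMeasurable Z μ) :
    (volume.restrict (Ioo 0 1)).map (VaR μ Z) = μ.map Z := by
  have := Measure.isProbabilityMeasure_map hZ
  refine Measure.ext_of_Iic _ _ fun z => ?_
  have hlevel : VaR μ Z ⁻¹' Iic z ∩ Ioo 0 1 = Iic (cdf (μ.map Z) z) ∩ Ioo 0 1 := by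
    ext s
    simp only [mem_inter_iff, mem_preimage, mem_Iic]
    exact and_congr_left (VaR_le_iff hZ)
  rw [Measure.map_apply_of_aemeasurable
      (aemeasurable_restrict_of_monotoneOn measurableSet_Ioo (VaR_monotoneOn hZ))
      measurableSet_Iic,
    Measure.restrict_apply' measurableSet_Ioo, hlevel,
    volume_Iic_inter_Ioo_zero_one (cdf_le_one _ z), ofReal_cdf]

lemma integral_comp_VaR (hZ : AEMeasurable Z μ) {g : ℝ → ℝ} (hg : Continuous g) :
    ∫ s in Ioo 0 1, g (VaR μ Z s) = ∫ ω, g (Z ω) ∂μ := by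
  rw [← integral_map (aemeasurable_restrict_of_monotoneOn measurableSet_Ioo (VaR_monotoneOn hZ))
      hg.aestronglyMeasurable, map_VaR_volume_restrict_Ioo hZ,
    integral_map hZ hg.aestronglyMeasurable]

lemma integrableOn_VaR (hZ : Integrable Z μ) : IntegrableOn (VaR μ Z) (Ioo 0 1) := by
  rw [IntegrableOn, ← Function.id_comp (VaR μ Z), ← integrable_map_measure
      aestronglyMeasurable_id
      (aemeasurable_restrict_of_monotoneOn measurableSet_Ioo (VaR_monotoneOn hZ.aemeasurable)),
    map_VaR_volume_restrict_Ioo hZ.aemeasurable,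
    integrable_map_measure aestronglyMeasurable_id hZ.aemeasurable]
  exact hZ

end Quantile

lemma oce_objective_eq {Ω : Type*} [MeasurableSpace Ω] {μ : Measure Ω} [IsProbabilityMeasure μ]
    {Z : Ω → ℝ} (hZ : Integrable Z μ) (a b ζ : ℝ) :
    ζ - ∫ ω, (a * max (-(Z ω) + ζ) 0 - b * max (-(-(Z ω) + ζ)) 0) ∂μ
      = a * ∫ ω, Z ω ∂μ + (1 - a) * ζ + (b - a) * ∫ ω, max (Z ω - ζ) 0 ∂μ := by
  have hpos : Integrable (fun ω => max (Z ω - ζ) 0) μ := (hZ.sub (integrable_const ζ)).pos_part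
  have hpointwise : ∀ ω, a * max (-(Z ω) + ζ) 0 - b * max (-(-(Z ω) + ζ)) 0
      = a * (ζ - Z ω) - (b - a) * max (Z ω - ζ) 0 := fun ω => by
    have := max_zero_sub_max_neg_zero_eq_self (ζ - Z ω)
    rw [neg_sub] at this
    rw [neg_add_eq_sub, neg_sub]
    linear_combination a * this
  have hlinear : Integrable (fun ω => a * (ζ - Z ω)) μ := ((integrable_const ζ).sub hZ).const_mul a
  simp only [hpointwise]
  rw [integral_sub hlinear (hpos.const_mul _), integral_const_mul, integral_const_mul,
    integral_sub (integrable_const ζ) hZ,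
    integral_const, probReal_univ, one_smul]
  ring

theorem oce_is_mixture_general {Ω : Type*} [MeasurableSpace Ω] (μ : Measure Ω)
    [IsProbabilityMeasure μ] (Z : Ω → ℝ) (hZ : Integrable Z μ)
    (a b : ℝ) (hab : a < 1) (hb : 1 < b) :
    (⨅ ζ : ℝ, (ζ - ∫ ω, (a * max (-(Z ω) + ζ) 0 - b * max (-(-(Z ω) + ζ)) 0) ∂μ))
      = a * (∫ ω, Z ω ∂μ) + (1 - a) * ES μ Z ((b - 1) / (b - a)) := by
  set α := (b - 1) / (b - a)
  have hba : 0 < b - a := by linarith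
  have hα : α ∈ Ioo 0 1 := ⟨div_pos (by linarith) hba, (div_lt_one hba).2 (by linarith)⟩
  have hk : (b - a) * (1 - α) = 1 - a := by simp only [α]; field_simp; ring
  have hobjective : ∀ ζ, ζ - ∫ ω, (a * max (-(Z ω) + ζ) 0 - b * max (-(-(Z ω) + ζ)) 0) ∂μ
      = a * ∫ ω, Z ω ∂μ + (b - a) * ((1 - α) * ζ + ∫ s in Ioo 0 1, max (VaR μ Z s - ζ) 0) :=
    fun ζ => by
      rw [oce_objective_eq hZ, integral_comp_VaR hZ.aemeasurable (g := fun x => max (x - ζ) 0)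
        (by fun_prop), ← hk]
      ring
  have hES : (1 - a) * ES μ Z α = (b - a) * ∫ s in Ioo α 1, VaR μ Z s := by
    rw [ES, integral_Ioc_eq_integral_Ioo, ← hk, mul_assoc,
      mul_inv_cancel_left₀ (sub_ne_zero.2 hα.2.ne')]
  have hleast := ((monotone_id.const_mul hba.le).const_add (a * ∫ ω, Z ω ∂μ)).map_isLeast
    (isLeast_rockafellarUryasev (VaR_monotoneOn hZ.aemeasurable) (integrableOn_VaR hZ) hα)
  rw [← range_comp] at hleast
  rw [hES, iInf_congr hobjective]
  exact hleast.csInf_eq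

/-- The optimized certainty equivalent risk measure associated with
`u(ξ) = a ξ₊ - b ξ₋`, `0 ≤ a < 1 < b`, is a convex combination of expectation and
Expected Shortfall at level `(b-1)/(b-a)`. -/
theorem oce_is_mixture {Ω : Type*} [MeasurableSpace Ω] (μ : Measure Ω)
    [IsProbabilityMeasure μ] (Z : Ω → ℝ) (hZ : Integrable Z μ)
    (a b : ℝ) (ha : 0 ≤ a) (hab : a < 1) (hb : 1 < b) :
    (⨅ ζ : ℝ, (ζ - ∫ ω, (a * max (-(Z ω) + ζ) 0 - b * max (-(-(Z ω) + ζ)) 0) ∂μ))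
      = a * (∫ ω, Z ω ∂μ) + (1 - a) * ES μ Z ((b - 1) / (b - a)) :=
  oce_is_mixture_general μ Z hZ a b hab hb
end
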